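/- Let m ≥ 1, let F_m = K_1 ∇ M_m be the friendship graph consisting of m triangles sharing exactly one common vertex, and let F_m^o be an odd-ballooning of F_m in which every substituted odd cycle has length at least five. Then for every n ≥ m, the graph K_m ∇ T_{n−m, 2} contains no subgraph isomorphic to F_m^o. -/

import Mathlib

open SimpleGraph

/-- The join `G ∇ H` of two graphs: disjoint union together with all cross edges. -/
def graphJoin {α β : Type} (G : SimpleGraph α) (H : SimpleGraph β) :
    SimpleGraph (α ⊕ β) :=
  SimpleGraph.fromRel (fun x y =>
    (∃ a b, x = Sum.inl a ∧ y = Sum.inr b) ∨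
    (∃ a b, x = Sum.inl a ∧ y = Sum.inl b ∧ G.Adj a b) ∨
    (∃ a b, x = Sum.inr a ∧ y = Sum.inr b ∧ H.Adj a b))

/-- The disjoint union `G ∪ H` of two graphs. -/
def graphDisjUnion {α β : Type} (G : SimpleGraph α) (H : SimpleGraph β) :
    SimpleGraph (α ⊕ β) :=
  SimpleGraph.fromRel (fun x y =>
    (∃ a b, x = Sum.inl a ∧ y = Sum.inl b ∧ G.Adj a b) ∨
    (∃ a b, x = Sum.inr a ∧ y = Sum.inr b ∧ H.Adj a b))

/-- The matching `M_m` consisting of `m` pairwise disjoint edges. -/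
def matchingGraph (m : ℕ) : SimpleGraph (Fin (2 * m)) :=
  SimpleGraph.fromRel (fun x y => (x : ℕ) / 2 = (y : ℕ) / 2)

/-- The star `S_m` on `m` vertices, with centre `0`. -/
def starGraph (m : ℕ) : SimpleGraph (Fin m) :=
  SimpleGraph.fromRel (fun x _ => (x : ℕ) = 0)

/-- `G` contains a (not necessarily induced) copy of `H` as a subgraph. -/
def ContainsCopy {α β : Type} (H : SimpleGraph α) (G : SimpleGraph β) : Prop :=
  ∃ f : α ↪ β, ∀ ⦃a b : α⦄, H.Adj a b → G.Adj (f a) (f b)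

/-- `G` is `H`-free: it contains no subgraph isomorphic to `H`. -/
def IsFreeOf {α β : Type} (H : SimpleGraph α) (G : SimpleGraph β) : Prop :=
  ¬ ContainsCopy H G

/-- The number of edges of a graph. -/
noncomputable def eCount {α : Type} (G : SimpleGraph α) : ℕ :=
  Nat.card G.edgeSet

/-- `G ∈ EX(n, H)`: `G` is an `n`-vertex `H`-free graph with the maximum possible
number of edges among all `n`-vertex `H`-free graphs. -/
def IsExtremalFree {α : Type} (H : SimpleGraph α) (n : ℕ) (G : SimpleGraph (Fin n)) : Prop :=
  IsFreeOf H G ∧ ∀ G' : SimpleGraph (Fin n), IsFreeOf H G' → eCount G' ≤ eCount G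

/-- The Turán number `ex(n, H)`. -/
noncomputable def exNum {α : Type} (n : ℕ) (H : SimpleGraph α) : ℕ :=
  sSup {m | ∃ G : SimpleGraph (Fin n), IsFreeOf H G ∧ eCount G = m}

/-- `Fo` is an odd-ballooning of `F` in which every substituted odd cycle has length
at least five: every edge `uv` of `F` is replaced by an odd cycle through `u` and `v`
(consisting of the edge `f u f v` together with a path of even length at least four
joining `f v` to `f u`), all new vertices of different substituted cycles being distinct. -/
def IsOddBallooning {α β : Type} (F : SimpleGraph α) (Fo : SimpleGraph β) : Prop :=
  ∃ (f : α ↪ β) (P : ∀ u v : α, F.Adj u v → Fo.Walk (f v) (f u)),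
    (∀ u v : α, F.Adj u v → Fo.Adj (f u) (f v)) ∧
    (∀ u v : α, ∀ h : F.Adj u v, (P u v h).IsPath) ∧
    (∀ u v : α, ∀ h : F.Adj u v, 4 ≤ (P u v h).length ∧ Even (P u v h).length) ∧
    (∀ u v : α, ∀ h : F.Adj u v, P v u h.symm = (P u v h).reverse) ∧
    (∀ u v : α, ∀ h : F.Adj u v, ∀ b : β, b ∈ (P u v h).support →
      b = f u ∨ b = f v ∨ b ∉ Set.range f) ∧
    (∀ u v u' v' : α, ∀ h : F.Adj u v, ∀ h' : F.Adj u' v', s(u, v) ≠ s(u', v') →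
      ∀ b : β, b ∈ (P u v h).support → b ∈ (P u' v' h').support → b ∈ Set.range f) ∧
    (∀ b : β, b ∈ Set.range f ∨ ∃ u v : α, ∃ h : F.Adj u v, b ∈ (P u v h).support) ∧
    (∀ e ∈ Fo.edgeSet, (∃ u v : α, ∃ _ : F.Adj u v, e = s(f u, f v)) ∨
      ∃ u v : α, ∃ h : F.Adj u v, e ∈ (P u v h).edges)

/-- The connected component `C` of `F` is an even cycle (of length at least four). -/
def IsEvenCycleComp {α : Type} (F : SimpleGraph α) (C : F.ConnectedComponent) : Prop :=
  ∃ m : ℕ, 2 ≤ m ∧ Nonempty ((F.induce C.supp) ≃g cycleGraph (2 * m))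

/-- Every connected component of `F` is either a non-trivial tree or an even cycle. -/
def GoodComponents {α : Type} (F : SimpleGraph α) : Prop :=
  ∀ C : F.ConnectedComponent,
    ((F.induce C.supp).IsTree ∧ 2 ≤ Nat.card C.supp) ∨ IsEvenCycleComp F C
/-- `M` (together with `E_t`) joined to a Turán graph contains `H`:
the defining property of members of the decomposition family `𝓜(H)`
of a graph `H` with chromatic number `r + 1`. -/
def DecompProp {γ δ : Type} (H : SimpleGraph γ) (r : ℕ) (M : SimpleGraph δ) : Prop :=
  ∃ t : ℕ, ContainsCopy H
    (graphJoin (graphDisjUnion M (⊥ : SimpleGraph (Fin t)))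
      (SimpleGraph.turanGraph ((r - 1) * t) (r - 1)))

/-- `M` is a member of the decomposition family `𝓜(H)` (for `H` of chromatic number
`r + 1`): it is minimal with respect to the subgraph relation such that
`H ⊆ (M ∪ E_t) ∇ T_{(r-1)t, r-1}` for some `t`.  (Minimality with respect to the
subgraph relation amounts to edge-minimality together with the absence of isolated
vertices.) -/
def IsMinimalDecomp {γ δ : Type} (H : SimpleGraph γ) (r : ℕ) (M : SimpleGraph δ) : Prop :=
  DecompProp H r M ∧
  (∀ M' : SimpleGraph δ, M' ≤ M → M' ≠ M → ¬ DecompProp H r M') ∧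
  (∀ v : δ, ∃ w : δ, M.Adj v w)

/-- `G` is `𝓜(H)`-free, where `𝓜(H)` is the decomposition family of `H`. -/
def DecompFree {γ : Type} (H : SimpleGraph γ) (r : ℕ) {n : ℕ} (G : SimpleGraph (Fin n)) : Prop :=
  ∀ (m : ℕ) (M : SimpleGraph (Fin m)), IsMinimalDecomp H r M → IsFreeOf M G

/-- `G ∈ EX(n, 𝓜(H))`. -/
def IsExtremalDecompFree {γ : Type} (H : SimpleGraph γ) (r n : ℕ)
    (G : SimpleGraph (Fin n)) : Prop :=
  DecompFree H r G ∧ ∀ G' : SimpleGraph (Fin n), DecompFree H r G' → eCount G' ≤ eCount G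

/-- The vertex type of the graph obtained from `F` by cracking all vertices of `U`:
the old vertices outside `U`, a vertex `u_v` for every pair `(u, v)` with `u ∈ U`
and `v` a neighbour of `u`, and a new vertex `w_{u,v}` for every such pair of
Type II (i.e. with `¬ T (u, v)`). -/
abbrev CrackVert {α : Type} (F : SimpleGraph α) (U : Set α) (T : α × α → Prop) : Type :=
  {a : α // a ∉ U} ⊕
    ({p : α × α // p.1 ∈ U ∧ F.Adj p.1 p.2} ⊕
      {p : α × α // (p.1 ∈ U ∧ F.Adj p.1 p.2) ∧ ¬ T p})

/-- The graph obtained from `F` by cracking all vertices of the independent set `U`,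
where each cracked edge `u v` (`u ∈ U`) is of Type I if `T (u, v)` holds (then `u_v`
is joined to `v`) and of Type II otherwise (then `u_v` is joined to the new vertex
`w_{u,v}`). -/
def crackedGraph {α : Type} (F : SimpleGraph α) (U : Set α) (T : α × α → Prop) :
    SimpleGraph (CrackVert F U T) :=
  SimpleGraph.fromRel (fun x y =>
    match x, y with
    | Sum.inl a, Sum.inl b => F.Adj a.val b.val
    | Sum.inl a, Sum.inr (Sum.inl p) => T p.val ∧ p.val.2 = a.val
    | Sum.inr (Sum.inl p), Sum.inr (Sum.inr q) => p.val = q.val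
    | _, _ => False)

/-- `M` is a member of the cracking family `𝓒(F)`: it is obtained from `F` by
cracking all vertices of some independent set `U` of `F`. -/
def InCrackingFamily {α δ : Type} (F : SimpleGraph α) (M : SimpleGraph δ) : Prop :=
  ∃ (U : Set α) (T : α × α → Prop),
    (∀ u ∈ U, ∀ v ∈ U, ¬ F.Adj u v) ∧ Nonempty (M ≃g crackedGraph F U T)

/-- The matching number of `G` is at most `ν`. -/
def MatchingNumberLE {V : Type} (G : SimpleGraph V) (ν : ℕ) : Prop :=
  ∀ s : Finset (Sym2 V), (∀ e ∈ s, e ∈ G.edgeSet) →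
    (∀ e ∈ s, ∀ e' ∈ s, e ≠ e' → ∀ x : V, x ∈ e → x ∉ e') → s.card ≤ ν

/-- The maximum degree of `G` is at most `Δ`. -/
def MaxDegreeLE {V : Type} (G : SimpleGraph V) (Δ : ℕ) : Prop :=
  ∀ v : V, Nat.card (G.neighborSet v) ≤ Δ

/-- `f(ν, Δ)`: the maximum number of edges of a finite graph with matching number
at most `ν` and maximum degree at most `Δ`. -/
noncomputable def fNuDelta (ν Δ : ℕ) : ℕ :=
  sSup {m | ∃ (k : ℕ) (G : SimpleGraph (Fin k)),
    MatchingNumberLE G ν ∧ MaxDegreeLE G Δ ∧ eCount G = m}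

/-- The number of edges of `G` joining distinct parts of the partition `c`. -/
noncomputable def crossCount {n r : ℕ} (G : SimpleGraph (Fin n)) (c : Fin n → Fin r) : ℕ :=
  Nat.card {e : Sym2 (Fin n) // e ∈ G.edgeSet ∧ ∃ x ∈ e, ∃ y ∈ e, c x ≠ c y}

/-- The number of edges of `G` inside part `i` of the partition `c`. -/
noncomputable def insideCount {n r : ℕ} (G : SimpleGraph (Fin n)) (c : Fin n → Fin r)
    (i : Fin r) : ℕ :=
  Nat.card {e : Sym2 (Fin n) // e ∈ G.edgeSet ∧ ∀ x ∈ e, c x = i}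

/-- `d_{V_i}(w)`: the number of neighbours of `w` in part `i` of the partition `c`. -/
noncomputable def degIn {n r : ℕ} (G : SimpleGraph (Fin n)) (c : Fin n → Fin r)
    (i : Fin r) (w : Fin n) : ℕ :=
  Nat.card {y : Fin n // c y = i ∧ G.Adj w y}

/-- The degree of `v` in `G`. -/
noncomputable def degAll {n : ℕ} (G : SimpleGraph (Fin n)) (v : Fin n) : ℕ :=
  Nat.card (G.neighborSet v)

/-!
Every substituted cycle of `F_m^o` is odd, and the right side `T_{n-m,2}` of the host is
bipartite, so each substituted cycle of a copy of `F_m^o` passes through one of the `m` clique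
vertices. Two substituted cycles share only branch vertices, so the `m` cycles of the matching
edges use `m` different clique vertices, i.e. all of them. The cycle of the spoke to a matching
vertex `x` then shares its clique vertex with some matching cycle, which forces `x` itself to sit
in the clique. This puts all `2m` matching vertices into a clique of size `m`.
-/

open SimpleGraph

section GraphJoin

variable {γ δ : Type} {G : SimpleGraph γ} {H : SimpleGraph δ}

lemma graphJoin_adj_inl_inr (a : γ) (b : δ) : (graphJoin G H).Adj (.inl a) (.inr b) := by
  simp [graphJoin]

lemma graphJoin_adj_inr_inr {a b : δ} : (graphJoin G H).Adj (.inr a) (.inr b) ↔ H.Adj a b := by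
  simpa [graphJoin, H.adj_comm b a] using fun h : H.Adj a b => h.ne

lemma exists_inl_mem_support_of_odd_length (hH : H.Colorable 2) {x : γ ⊕ δ}
    (p : (graphJoin G H).Walk x x) (hp : Odd p.length) : ∃ a, Sum.inl a ∈ p.support := by
  by_contra! hleft
  have hright : ∀ v ∈ p.support, v ∈ Set.range Sum.inr := by
    rintro (a | b) hv
    · exact absurd hv (hleft a)
    · exact ⟨b, rfl⟩
  obtain ⟨c⟩ := hH
  let c' : ((graphJoin G H).induce (Set.range Sum.inr)).Coloring (Fin 2) :=
    Coloring.mk (fun v => Sum.elim (fun _ => 0) c v.1) <| by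
      rintro ⟨_, a, rfl⟩ ⟨_, b, rfl⟩ hab
      exact c.valid (graphJoin_adj_inr_inr.mp hab)
  have heven := two_colorable_iff_forall_loop_even.mp ⟨c'⟩ _ (p.induce _ hright)
  have hlen : (p.induce _ hright).length = p.length := by
    rw [← Walk.length_map (Embedding.induce _).toHom, Walk.map_induce]; rfl
  exact Nat.not_even_iff_odd.mpr hp (hlen ▸ heven)

end GraphJoin

lemma turanGraph_colorable {n r : ℕ} (hr : 0 < r) : (turanGraph n r).Colorable r :=
  ⟨Coloring.mk (fun v => ⟨v % r, Nat.mod_lt _ hr⟩) fun h => by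
    simpa [Fin.ext_iff] using turanGraph_adj.mp h⟩

/-- `hit u v h` records a left-side vertex met by the cycle substituted for the edge `uv`. -/
def SeparatedHits {α γ δ : Type} (F : SimpleGraph α) (e : α → γ ⊕ δ)
    (hit : ∀ u v, F.Adj u v → γ) : Prop :=
  ∀ u v u' v' (h : F.Adj u v) (h' : F.Adj u' v'), s(u, v) ≠ s(u', v') →
    hit u v h = hit u' v' h' → ∃ w ∈ s(u, v), w ∈ s(u', v') ∧ e w = .inl (hit u v h)

theorem IsOddBallooning.exists_separatedHits_of_containsCopy_graphJoin
    {α β γ δ : Type} {F : SimpleGraph α} {Fo : SimpleGraph β} {G : SimpleGraph γ}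
    {H : SimpleGraph δ} (hFo : IsOddBallooning F Fo) (hH : H.Colorable 2)
    (hcopy : ContainsCopy Fo (graphJoin G H)) :
    ∃ (e : α ↪ γ ⊕ δ) (hit : ∀ u v, F.Adj u v → γ), SeparatedHits F e hit := by
  obtain ⟨f, P, hadj, -, hlen, -, hsup, hdisj, -, -⟩ := hFo
  obtain ⟨g, hg⟩ := hcopy
  let φ : Fo →g graphJoin G H := ⟨g, fun h => hg h⟩
  have hmeet : ∀ u v (h : F.Adj u v), ∃ k, ∃ b ∈ (P u v h).support, g b = .inl k := by
    intro u v h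
    have hodd : Odd ((Walk.cons (hadj u v h) (P u v h)).map φ).length := by
      simpa using (hlen u v h).2.add_one
    obtain ⟨k, hk⟩ := exists_inl_mem_support_of_odd_length hH _ hodd
    rw [Walk.support_map, Walk.support_cons, List.map_cons, List.mem_cons, List.mem_map] at hk
    rcases hk with hk | ⟨b, hb, hgb⟩
    · exact ⟨k, f u, (P u v h).end_mem_support, hk.symm⟩
    · exact ⟨k, b, hb, hgb⟩
  choose hit b hb hgb using hmeet
  refine ⟨f.trans g, hit, fun u v u' v' h h' hne heq => ?_⟩
  have hbb : b u v h = b u' v' h' := g.injective (by rw [hgb, hgb, heq])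
  obtain ⟨w, hw⟩ := hdisj u v u' v' h h' hne _ (hb u v h) (hbb ▸ hb u' v' h')
  have hendpoint : ∀ {x y} (hxy : F.Adj x y), f w ∈ (P x y hxy).support → w ∈ s(x, y) := by
    intro x y hxy hmem
    rcases hsup x y hxy _ hmem with hx | hy | hout
    · simp [f.injective hx]
    · simp [f.injective hy]
    · exact absurd ⟨w, rfl⟩ hout
  refine ⟨w, hendpoint h (hw ▸ hb u v h), hendpoint h' (hw ▸ hbb ▸ hb u' v' h'), ?_⟩
  simp [hw, hgb]

abbrev friendshipGraph (m : ℕ) : SimpleGraph (Fin 1 ⊕ Fin (2 * m)) :=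
  graphJoin (⊤ : SimpleGraph (Fin 1)) (matchingGraph m)

namespace friendshipGraph

variable {m : ℕ}

def pairFst (j : Fin m) : Fin 1 ⊕ Fin (2 * m) := .inr ⟨2 * j, by omega⟩

def pairSnd (j : Fin m) : Fin 1 ⊕ Fin (2 * m) := .inr ⟨2 * j + 1, by omega⟩

lemma adj_pair (j : Fin m) : (friendshipGraph m).Adj (pairFst j) (pairSnd j) := by
  rw [pairFst, pairSnd, graphJoin_adj_inr_inr, matchingGraph, fromRel_adj]
  simp only [ne_eq, Fin.mk.injEq]
  omega

lemma adj_spoke (x : Fin (2 * m)) : (friendshipGraph m).Adj (.inl 0) (.inr x) :=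
  graphJoin_adj_inl_inr _ _

lemma eq_of_mem_pair {j : Fin m} {w : Fin 1 ⊕ Fin (2 * m)} (hw : w ∈ s(pairFst j, pairSnd j))
    {j' : Fin m} (hw' : w ∈ s(pairFst j', pairSnd j')) : j = j' := by
  simp only [Sym2.mem_iff, pairFst, pairSnd] at hw hw'
  rcases hw with rfl | rfl <;> rcases hw' with h | h <;>
    simp only [Sum.inr.injEq, Fin.mk.injEq] at h <;> exact Fin.ext (by omega)

theorem not_separatedHits {δ : Type} (hm : 1 ≤ m) (e : Fin 1 ⊕ Fin (2 * m) ↪ Fin m ⊕ δ)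
    (hit : ∀ u v, (friendshipGraph m).Adj u v → Fin m) :
    ¬ SeparatedHits (friendshipGraph m) e hit := by
  intro hsep
  let κ : Fin m → Fin m := fun j => hit _ _ (adj_pair j)
  let σ : Fin (2 * m) → Fin m := fun x => hit _ _ (adj_spoke x)
  have hκ : κ.Injective := by
    intro j j' hjj
    by_contra hne
    have hpairs : s(pairFst j, pairSnd j) ≠ s(pairFst j', pairSnd j') := fun h =>
      hne (eq_of_mem_pair (Sym2.mem_mk_left _ _) (h ▸ Sym2.mem_mk_left _ _))
    obtain ⟨w, hw, hw', -⟩ := hsep _ _ _ _ _ _ hpairs hjj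
    exact hne (eq_of_mem_pair hw hw')
  have hspoke : ∀ x, e (.inr x) = .inl (σ x) := by
    intro x
    obtain ⟨j, hj⟩ := Finite.injective_iff_surjective.mp hκ (σ x)
    obtain ⟨w, hw, hw', hew⟩ :=
      hsep _ _ _ _ (adj_spoke x) (adj_pair j) (by simp [pairFst, pairSnd]) hj.symm
    simp only [Sym2.mem_iff, pairFst, pairSnd] at hw hw'
    rcases hw with rfl | rfl
    · simp at hw'
    · exact hew
  have hσ : σ.Injective := fun x y hxy =>
    Sum.inr_injective (e.injective ((hspoke x).trans (hxy ▸ (hspoke y).symm)))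
  have hcard := Fintype.card_le_of_injective σ hσ
  simp only [Fintype.card_fin] at hcard
  omega

end friendshipGraph

theorem stmt_17_general {β : Type} (m : ℕ) (hm : 1 ≤ m)
    (Fo : SimpleGraph β)
    (hFo : IsOddBallooning (graphJoin (⊤ : SimpleGraph (Fin 1)) (matchingGraph m)) Fo) :
    ∀ n : ℕ, m ≤ n →
      IsFreeOf Fo (graphJoin (⊤ : SimpleGraph (Fin m))
        (SimpleGraph.turanGraph (n - m) 2)) := by
  intro n _ hcopy
  obtain ⟨e, hit, hsep⟩ :=
    hFo.exists_separatedHits_of_containsCopy_graphJoin (turanGraph_colorable two_pos) hcopy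
  exact friendshipGraph.not_separatedHits hm e hit hsep

/-- Let `m ≥ 1`, let `F_m = K₁ ∇ M_m` be the friendship graph, and let
`F_m^o` be an odd-ballooning of `F_m` with every substituted odd cycle of length at
least five.  Then for every `n ≥ m`, the graph `K_m ∇ T_{n-m, 2}` contains no subgraph
isomorphic to `F_m^o`. -/
theorem stmt_17 {β : Type} [Fintype β] (m : ℕ) (hm : 1 ≤ m)
    (Fo : SimpleGraph β)
    (hFo : IsOddBallooning (graphJoin (⊤ : SimpleGraph (Fin 1)) (matchingGraph m)) Fo) :
    ∀ n : ℕ, m ≤ n →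
      IsFreeOf Fo (graphJoin (⊤ : SimpleGraph (Fin m))
        (SimpleGraph.turanGraph (n - m) 2)) :=
  stmt_17_general m hm Fo hFo
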